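/- arXiv:2409.13339 — 2 statements merged into one kernel-verified Lean document; each statement's English description precedes it below -/
import Mathlib

section
/- Let F be a field and let a ∈ F with a ∉ {−1, 0, 1}. Then the diagonal matrix diag(a, a⁻¹) ∈ SL_2(F) is a commutator of unipotent matrices of index 2 if and only if a = b² for some b ∈ F. -/
open Matrix

variable {F : Type*} [Field F]

/-- A unipotent matrix of index 2: `A ≠ I` and `(A - I)² = 0`. -/
def IsU2 {m : Type*} [Fintype m] [DecidableEq m] (A : Matrix m m F) : Prop :=
  A ≠ 1 ∧ (A - 1) ^ 2 = 0

/-- A commutator `X * Y * X⁻¹ * Y⁻¹` of unipotent matrices of index 2. -/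
def IsCommU2 {m : Type*} [Fintype m] [DecidableEq m] (A : Matrix m m F) : Prop :=
  ∃ X Y : Matrix m m F, IsU2 X ∧ IsU2 Y ∧ A = X * Y * X⁻¹ * Y⁻¹

/-- `A` is a product of at most `k` commutators of unipotent matrices of index 2. -/
def IsProdCommU2 {m : Type*} [Fintype m] [DecidableEq m] (k : ℕ) (A : Matrix m m F) : Prop :=
  ∃ L : List (Matrix m m F), L.length ≤ k ∧ (∀ B ∈ L, IsCommU2 B) ∧ L.prod = A

/-- `A` is a product of at most `k` unipotent matrices of index 2. -/
def IsProdU2 {m : Type*} [Fintype m] [DecidableEq m] (k : ℕ) (A : Matrix m m F) : Prop :=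
  ∃ L : List (Matrix m m F), L.length ≤ k ∧ (∀ B ∈ L, IsU2 B) ∧ L.prod = A

/-!
Writing `X = 1 + N`, `Y = 1 + M` with `N² = M² = 0`, the `2 × 2` identity `N M N = tr (N M) • N`
gives `tr [X, Y] = 2 + tr (N M)²`, so `a + a⁻¹ = 2 + t²`, i.e. `a = ((a - 1) / t)²`.
Conversely, for `a = b²` the commutator of `1 + E₁₂` and `1 + (b⁻¹ - b) E₂₁` has the distinct
eigenvalues `b²` and `b⁻²`, hence is conjugate to `diag (b², b⁻²)`, and conjugation preserves
commutators of unipotent matrices of index 2.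
-/
namespace Matrix

variable {n R : Type*} [Fintype n] [DecidableEq n] [CommRing R]

theorem inv_one_add_of_sq_eq_zero {N : Matrix n n R} (hN : N ^ 2 = 0) : (1 + N)⁻¹ = 1 - N := by
  apply inv_eq_right_inv
  rw [show (1 + N) * (1 - N) = 1 - N ^ 2 by noncomm_ring, hN, sub_zero]

theorem mul_mul_eq_trace_smul_sub_det_smul_adjugate (N M : Matrix (Fin 2) (Fin 2) R) :
    N * M * N = trace (N * M) • N - det N • adjugate M := by
  rw [adjugate_fin_two]
  ext i j
  fin_cases i <;> fin_cases j <;>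
    simp [mul_apply, trace_fin_two, det_fin_two, Fin.sum_univ_two] <;> ring

theorem mul_mul_eq_trace_smul_of_sq_eq_zero [IsReduced R] {N : Matrix (Fin 2) (Fin 2) R}
    (hN : N ^ 2 = 0) (M : Matrix (Fin 2) (Fin 2) R) : N * M * N = trace (N * M) • N := by
  have hdet : det N = 0 := IsReduced.eq_zero _ ⟨2, by simp [← det_pow, hN]⟩
  rw [mul_mul_eq_trace_smul_sub_det_smul_adjugate, hdet, zero_smul, sub_zero]

theorem trace_one_add_mul_one_add_mul_one_sub_mul_one_sub [IsReduced R]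
    {N M : Matrix (Fin 2) (Fin 2) R} (hN : N ^ 2 = 0) (hM : M ^ 2 = 0) :
    trace ((1 + N) * (1 + M) * (1 - N) * (1 - M)) = 2 + trace (N * M) ^ 2 := by
  have expand : (1 + N) * (1 + M) * (1 - N) * (1 - M) =
      1 + N * M - M * N + M * N * M - N * M * N + N * M * N * M
        - M ^ 2 - N ^ 2 + N ^ 2 * M - N * M ^ 2 := by noncomm_ring
  have hMNM : trace (M * N * M) = 0 := by
    rw [trace_mul_cycle, ← sq, hM, zero_mul, trace_zero]
  have hNMN : trace (N * M * N) = 0 := by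
    rw [trace_mul_cycle, ← sq, hN, zero_mul, trace_zero]
  have hNMNM : trace (N * M * N * M) = trace (N * M) ^ 2 := by
    rw [mul_mul_eq_trace_smul_of_sq_eq_zero hN M, smul_mul_assoc, trace_smul, smul_eq_mul, sq]
  rw [expand, hN, hM]
  simp only [trace_add, trace_sub, trace_one, trace_mul_comm M N, hMNM, hNMN, hNMNM,
    zero_mul, mul_zero, trace_zero, Fintype.card_fin]
  push_cast
  ring

end Matrix

section

variable {m : Type*} [Fintype m] [DecidableEq m]

theorem isU2_iff {X : Matrix m m F} : IsU2 X ↔ ∃ N, N ≠ 0 ∧ N ^ 2 = 0 ∧ X = 1 + N :=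
  ⟨fun ⟨hX1, hX2⟩ => ⟨X - 1, sub_ne_zero.mpr hX1, hX2, by abel⟩,
    by rintro ⟨N, hN0, hN, rfl⟩; exact ⟨by simpa using hN0, by simpa using hN⟩⟩

theorem isCommU2_of_sq_eq_zero {N M : Matrix m m F} (hN0 : N ≠ 0) (hN : N ^ 2 = 0)
    (hM0 : M ≠ 0) (hM : M ^ 2 = 0) : IsCommU2 ((1 + N) * (1 + M) * (1 - N) * (1 - M)) :=
  ⟨1 + N, 1 + M, isU2_iff.mpr ⟨N, hN0, hN, rfl⟩, isU2_iff.mpr ⟨M, hM0, hM, rfl⟩, by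
    rw [inv_one_add_of_sq_eq_zero hN, inv_one_add_of_sq_eq_zero hM]⟩

theorem IsU2.conj {X : Matrix m m F} (hX : IsU2 X) {P : Matrix m m F} (hP : IsUnit P.det) :
    IsU2 (P * X * P⁻¹) := by
  refine ⟨fun h => hX.1 ?_, ?_⟩
  · calc X = P⁻¹ * (P * X * P⁻¹) * P := by
          rw [mul_assoc, nonsing_inv_mul_cancel_right _ _ hP, nonsing_inv_mul_cancel_left _ _ hP]
      _ = 1 := by rw [h, mul_one, nonsing_inv_mul _ hP]
  · have hconj : P * X * P⁻¹ - 1 = P * (X - 1) * P⁻¹ := by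
      rw [mul_sub, sub_mul, mul_one, mul_nonsing_inv _ hP]
    have hsq : (P * (X - 1) * P⁻¹) ^ 2 = P * (X - 1) ^ 2 * P⁻¹ := by
      simp only [sq, mul_assoc, nonsing_inv_mul_cancel_left _ _ hP]
    rw [hconj, hsq, hX.2, mul_zero, zero_mul]

theorem IsCommU2.conj {C : Matrix m m F} (hC : IsCommU2 C) {P : Matrix m m F}
    (hP : IsUnit P.det) : IsCommU2 (P * C * P⁻¹) := by
  obtain ⟨X, Y, hX, hY, rfl⟩ := hC
  refine ⟨P * X * P⁻¹, P * Y * P⁻¹, hX.conj hP, hY.conj hP, ?_⟩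
  simp only [Matrix.mul_inv_rev, nonsing_inv_nonsing_inv _ hP, mul_assoc,
    nonsing_inv_mul_cancel_left _ _ hP]

theorem IsCommU2.of_mul_eq_mul {C D P : Matrix m m F} (hC : IsCommU2 C) (hP : IsUnit P.det)
    (h : P * C = D * P) : IsCommU2 D := by
  simpa [h, mul_nonsing_inv_cancel_right _ _ hP] using hC.conj hP

end

theorem IsCommU2.exists_trace_eq_two_add_sq {C : Matrix (Fin 2) (Fin 2) F} (hC : IsCommU2 C) :
    ∃ t, trace C = 2 + t ^ 2 := by
  obtain ⟨X, Y, hX, hY, rfl⟩ := hC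
  obtain ⟨N, -, hN, rfl⟩ := isU2_iff.mp hX
  obtain ⟨M, -, hM, rfl⟩ := isU2_iff.mp hY
  rw [inv_one_add_of_sq_eq_zero hN, inv_one_add_of_sq_eq_zero hM]
  exact ⟨_, trace_one_add_mul_one_add_mul_one_sub_mul_one_sub hN hM⟩

theorem isCommU2_diagonal_sq {b : F} (hb0 : b ≠ 0) (hb1 : b ^ 2 ≠ 1) (hb2 : b ^ 2 ≠ -1) :
    IsCommU2 !![b ^ 2, 0; 0, (b ^ 2)⁻¹] := by
  have hc : b⁻¹ - b ≠ 0 := by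
    contrapose! hb1
    field_simp at hb1
    linear_combination -hb1
  have hC := isCommU2_of_sq_eq_zero (N := !![0, 1; 0, 0]) (M := !![0, 0; b⁻¹ - b, 0])
    (by simp [← Matrix.ext_iff, Fin.forall_fin_two])
    (by ext i j; fin_cases i <;> fin_cases j <;> simp [sq, mul_apply])
    (by simpa [← Matrix.ext_iff, Fin.forall_fin_two])
    (by ext i j; fin_cases i <;> fin_cases j <;> simp [sq, mul_apply])
  -- the rows of `P` are left eigenvectors of the commutator for `b²` and `b⁻²`
  refine hC.of_mul_eq_mul (P := !![1 - b, -1; 1 + b, -b]) ?_ ?_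
  · rw [det_fin_two_of, isUnit_iff_ne_zero]
    contrapose! hb2
    linear_combination hb2
  · ext i j
    fin_cases i <;> fin_cases j <;> simp [mul_apply, Fin.sum_univ_two, one_apply] <;>
      field_simp <;> ring

theorem stmt9 {F : Type*} [Field F] (a : F) (ha1 : a ≠ -1) (ha0 : a ≠ 0) (ha2 : a ≠ 1) :
    IsCommU2 (!![a, 0; 0, a⁻¹] : Matrix (Fin 2) (Fin 2) F) ↔ ∃ b : F, a = b ^ 2 := by
  constructor
  · intro h
    obtain ⟨t, ht⟩ := h.exists_trace_eq_two_add_sq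
    rw [trace_fin_two_of] at ht
    field_simp at ht
    have ht0 : t ≠ 0 := by
      rintro rfl
      apply ha2
      have hsq : (a - 1) ^ 2 = 0 := by linear_combination ht
      simpa [sub_eq_zero] using hsq
    exact ⟨(a - 1) / t, by field_simp; linear_combination -ht⟩
  · rintro ⟨b, rfl⟩
    exact isCommU2_diagonal_sq (by rintro rfl; simp at ha0) ha2 ha1
end

section
/- Let F be a field with |F| ≤ 3 (i.e., |F| = 2 or |F| = 3). Then every matrix in the commutator subgroup SL_2(F)′ of SL_2(F) is a product of at most |F| − 1 commutators of unipotent matrices of index 2, and the commutator subgroup SL_2(F)′ is a proper subgroup of SL_2(F). -/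
open Matrix

variable {F : Type*} [Field F]

/-!
Over `𝔽₂` and `𝔽₃` everything is a finite computation once `F` is identified with `ZMod p`.
The commutator subgroup of `SL(2, 𝔽₂)` is the cyclic group of order 3 and that of
`SL(2, 𝔽₃)` is the quaternion group `Q₈`; neither contains the transvection `!![1, 1; 0, 1]`.
Every nontrivial element of these groups is a commutator `[X, Y]` of an upper and a lower
transvection, except `-1 ∈ Q₈`, which is the square of one.
-/

open scoped MatrixGroups commutatorElement

section Unipotent

variable {m : Type*} [Fintype m] [DecidableEq m]

theorem IsU2.mul_two_sub {X : Matrix m m F} (hX : IsU2 X) : X * (2 - X) = 1 := by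
  have : X * (2 - X) = 1 - (X - 1) ^ 2 := by noncomm_ring
  rw [this, hX.2, sub_zero]

theorem IsU2.inv_eq {X : Matrix m m F} (hX : IsU2 X) : X⁻¹ = 2 - X :=
  Matrix.inv_eq_right_inv hX.mul_two_sub

theorem IsU2.map {K : Type*} [Field K] (f : F →+* K) {X : Matrix m m F} (hX : IsU2 X) :
    IsU2 (f.mapMatrix X) := by
  refine ⟨fun h ↦ hX.1 (Matrix.map_injective f.injective ?_), ?_⟩
  · simpa using h
  · rw [← map_one f.mapMatrix, ← map_sub, ← map_pow, hX.2, map_zero]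

theorem IsCommU2.map {K : Type*} [Field K] (f : F →+* K) {A : Matrix m m F} (hA : IsCommU2 A) :
    IsCommU2 (f.mapMatrix A) := by
  obtain ⟨X, Y, hX, hY, rfl⟩ := hA
  refine ⟨_, _, hX.map f, hY.map f, ?_⟩
  rw [hX.inv_eq, hY.inv_eq, (hX.map f).inv_eq, (hY.map f).inv_eq]
  simp only [map_mul, map_sub, map_ofNat]

theorem IsProdCommU2.map {K : Type*} [Field K] (f : F →+* K) {k : ℕ} {A : Matrix m m F}
    (hA : IsProdCommU2 k A) : IsProdCommU2 k (f.mapMatrix A) := by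
  obtain ⟨L, hlen, hL, rfl⟩ := hA
  refine ⟨L.map f.mapMatrix, by simpa using hlen, ?_, (map_list_prod _ L).symm⟩
  simp only [List.mem_map, forall_exists_index, and_imp, forall_apply_eq_imp_iff₂]
  exact fun B hB ↦ (hL B hB).map f

theorem isProdCommU2_one (k : ℕ) : IsProdCommU2 k (1 : Matrix m m F) :=
  ⟨[], Nat.zero_le k, by simp, rfl⟩

theorem IsCommU2.isProdCommU2 {A : Matrix m m F} (hA : IsCommU2 A) {k : ℕ} (hk : 1 ≤ k) :
    IsProdCommU2 k A :=
  ⟨[A], hk, by simpa using hA, List.prod_singleton⟩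

theorem IsProdCommU2.mul {k l : ℕ} {A B : Matrix m m F} (hA : IsProdCommU2 k A)
    (hB : IsProdCommU2 l B) : IsProdCommU2 (k + l) (A * B) := by
  obtain ⟨L, hL, hLc, rfl⟩ := hA
  obtain ⟨M, hM, hMc, rfl⟩ := hB
  refine ⟨L ++ M, by simp only [List.length_append]; omega, fun C hC ↦ ?_, List.prod_append⟩
  rcases List.mem_append.mp hC with hC | hC
  exacts [hLc C hC, hMc C hC]

end Unipotent

theorem isU2_upper {a : F} (ha : a ≠ 0) : IsU2 !![1, a; 0, 1] := by
  refine ⟨fun h ↦ ha ?_, ?_⟩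
  · simpa using congrFun (congrFun h 0) 1
  · ext i j; fin_cases i <;> fin_cases j <;> simp [sq, Matrix.one_fin_two]

theorem isU2_lower {b : F} (hb : b ≠ 0) : IsU2 !![1, 0; b, 1] := by
  refine ⟨fun h ↦ hb ?_, ?_⟩
  · simpa using congrFun (congrFun h 1) 0
  · ext i j; fin_cases i <;> fin_cases j <;> simp [sq, Matrix.one_fin_two]

theorem isCommU2_upper_lower {a b : F} (ha : a ≠ 0) (hb : b ≠ 0) :
    IsCommU2 !![1 + a * b + a ^ 2 * b ^ 2, -(a ^ 2 * b); a * b ^ 2, 1 - a * b] := by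
  refine ⟨_, _, isU2_upper ha, isU2_lower hb, ?_⟩
  rw [(isU2_upper ha).inv_eq, (isU2_lower hb).inv_eq]
  ext i j; fin_cases i <;> fin_cases j <;> simp [ofNat_fin_two] <;> ring

theorem isCommU2_lower_upper {a b : F} (ha : a ≠ 0) (hb : b ≠ 0) :
    IsCommU2 !![1 - a * b, a ^ 2 * b; -(a * b ^ 2), 1 + a * b + a ^ 2 * b ^ 2] := by
  refine ⟨_, _, isU2_lower hb, isU2_upper ha, ?_⟩
  rw [(isU2_upper ha).inv_eq, (isU2_lower hb).inv_eq]
  ext i j; fin_cases i <;> fin_cases j <;> simp [ofNat_fin_two] <;> ring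

section CommutatorSubgroup

variable {G H : Type*} [Group G] [Group H]

theorem map_mem_commutator (f : G →* H) {g : G} (hg : g ∈ commutator G) :
    f g ∈ commutator H := by
  rw [commutator_def] at hg ⊢
  have := Subgroup.mem_map_of_mem f hg
  rw [Subgroup.map_commutator] at this
  exact Subgroup.commutator_mono le_top le_top this

theorem commutator_induction {P : G → Prop} (mul : ∀ a b, P a → P b → P (a * b))
    (inv : ∀ a, P a → P a⁻¹) (commutatorElement : ∀ a b : G, P ⁅a, b⁆) {g : G}
    (hg : g ∈ commutator G) : P g := by
  rw [commutator_eq_closure] at hg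
  induction hg using Subgroup.closure_induction with
  | mem x hx => obtain ⟨a, b, rfl⟩ := hx; exact commutatorElement a b
  | one => simpa using commutatorElement 1 1
  | mul x y _ _ hx hy => exact mul x y hx hy
  | inv x _ hx => exact inv x hx

end CommutatorSubgroup

section RingEquiv

variable {n : Type*} [Fintype n] [DecidableEq n] {K : Type*} [Field K]

theorem isProdCommU2_of_mem_commutator_of_ringEquiv (e : K ≃+* F) {k : ℕ}
    (hK : ∀ B : SpecialLinearGroup n K, B ∈ commutator _ → IsProdCommU2 k (B : Matrix n n K))
    (A : SpecialLinearGroup n F) (hA : A ∈ commutator _) : IsProdCommU2 k (A : Matrix n n F) := by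
  have hB := map_mem_commutator (SpecialLinearGroup.map (e.symm : F →+* K)) hA
  have hAB : e.toRingHom.mapMatrix (SpecialLinearGroup.map (e.symm : F →+* K) A) =
      (A : Matrix n n F) := by
    ext i j; simp
  rw [← hAB]
  exact (hK _ hB).map _

theorem commutator_ne_top_of_ringEquiv (e : K ≃+* F)
    (hK : commutator (SpecialLinearGroup n K) ≠ ⊤) : commutator (SpecialLinearGroup n F) ≠ ⊤ := by
  refine fun hF ↦ hK (eq_top_iff.mpr fun B _ ↦ ?_)
  have hB := map_mem_commutator (SpecialLinearGroup.map (e.symm : F →+* K))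
    (hF ▸ Subgroup.mem_top (SpecialLinearGroup.map (e : K →+* F) B))
  convert hB using 1
  ext i j; simp

end RingEquiv

def derivedSL2ZMod2 : List (Matrix (Fin 2) (Fin 2) (ZMod 2)) :=
  [1, !![1, 1; 1, 0], !![0, 1; 1, 1]]

theorem coe_mem_derivedSL2ZMod2 {g : SL(2, ZMod 2)} (hg : g ∈ commutator _) :
    (g : Matrix (Fin 2) (Fin 2) (ZMod 2)) ∈ derivedSL2ZMod2 :=
  commutator_induction
    (P := fun g : SL(2, ZMod 2) ↦ (g : Matrix (Fin 2) (Fin 2) (ZMod 2)) ∈ derivedSL2ZMod2)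
    (by decide) (by decide) (by decide) hg

theorem isProdCommU2_of_mem_derivedSL2ZMod2 :
    ∀ M ∈ derivedSL2ZMod2, IsProdCommU2 1 M := by
  simp only [derivedSL2ZMod2, List.forall_mem_cons, List.not_mem_nil, IsEmpty.forall_iff,
    implies_true, and_true]
  refine ⟨isProdCommU2_one 1, IsCommU2.isProdCommU2 ?_ le_rfl, IsCommU2.isProdCommU2 ?_ le_rfl⟩
  · convert isCommU2_upper_lower (F := ZMod 2) one_ne_zero one_ne_zero using 1; decide
  · convert isCommU2_lower_upper (F := ZMod 2) one_ne_zero one_ne_zero using 1; decide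

theorem commutator_sl2ZMod2_ne_top : commutator SL(2, ZMod 2) ≠ ⊤ := fun h ↦ by
  absurd coe_mem_derivedSL2ZMod2
    (h ▸ Subgroup.mem_top (G := SL(2, ZMod 2)) ⟨!![1, 1; 0, 1], by decide⟩)
  decide

-- `1, -1, i, -i, j, -j, k, -k`
def derivedSL2ZMod3 : List (Matrix (Fin 2) (Fin 2) (ZMod 3)) :=
  [1, !![2, 0; 0, 2], !![0, 2; 1, 0], !![0, 1; 2, 0],
    !![1, 1; 1, 2], !![2, 2; 2, 1], !![1, 2; 2, 2], !![2, 1; 1, 1]]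

theorem coe_mem_derivedSL2ZMod3 {g : SL(2, ZMod 3)} (hg : g ∈ commutator _) :
    (g : Matrix (Fin 2) (Fin 2) (ZMod 3)) ∈ derivedSL2ZMod3 :=
  commutator_induction
    (P := fun g : SL(2, ZMod 3) ↦ (g : Matrix (Fin 2) (Fin 2) (ZMod 3)) ∈ derivedSL2ZMod3)
    (by decide) (by decide) (by decide) hg

theorem isProdCommU2_of_mem_derivedSL2ZMod3 :
    ∀ M ∈ derivedSL2ZMod3, IsProdCommU2 2 M := by
  have h1 : (1 : ZMod 3) ≠ 0 := by decide
  have h2 : (2 : ZMod 3) ≠ 0 := by decide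
  have hi : IsCommU2 !![(0 : ZMod 3), 2; 1, 0] := by
    convert isCommU2_upper_lower h1 h1 using 1; decide
  simp only [derivedSL2ZMod3, List.forall_mem_cons, List.not_mem_nil, IsEmpty.forall_iff,
    implies_true, and_true]
  refine ⟨isProdCommU2_one 2, ?_, hi.isProdCommU2 one_le_two, ?_⟩
  · convert (hi.isProdCommU2 le_rfl).mul (hi.isProdCommU2 le_rfl) using 1; decide
  refine ⟨?_, ?_, ?_, ?_, ?_⟩ <;> refine IsCommU2.isProdCommU2 ?_ one_le_two
  · convert isCommU2_upper_lower h2 h2 using 1; decide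
  · convert isCommU2_upper_lower h1 h2 using 1; decide
  · convert isCommU2_lower_upper h1 h2 using 1; decide
  · convert isCommU2_upper_lower h2 h1 using 1; decide
  · convert isCommU2_lower_upper h2 h1 using 1; decide

theorem commutator_sl2ZMod3_ne_top : commutator SL(2, ZMod 3) ≠ ⊤ := fun h ↦ by
  absurd coe_mem_derivedSL2ZMod3
    (h ▸ Subgroup.mem_top (G := SL(2, ZMod 3)) ⟨!![1, 1; 0, 1], by decide⟩)
  decide

theorem stmt19 {F : Type*} [Field F] [Fintype F] (hF : Fintype.card F ≤ 3) :
    (∀ A : Matrix.SpecialLinearGroup (Fin 2) F,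
      A ∈ commutator (Matrix.SpecialLinearGroup (Fin 2) F) →
      IsProdCommU2 (Fintype.card F - 1) (A : Matrix (Fin 2) (Fin 2) F)) ∧
    commutator (Matrix.SpecialLinearGroup (Fin 2) F) ≠ ⊤ := by
  have hcard : Fintype.card F = 2 ∨ Fintype.card F = 3 := by
    have := Fintype.one_lt_card (α := F); omega
  rcases hcard with hcard | hcard
  · have e := ZMod.ringEquivOfPrime F Nat.prime_two hcard
    rw [hcard]
    exact ⟨isProdCommU2_of_mem_commutator_of_ringEquiv e fun B hB ↦
        isProdCommU2_of_mem_derivedSL2ZMod2 _ (coe_mem_derivedSL2ZMod2 hB),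
      commutator_ne_top_of_ringEquiv e commutator_sl2ZMod2_ne_top⟩
  · have e := ZMod.ringEquivOfPrime F Nat.prime_three hcard
    rw [hcard]
    exact ⟨isProdCommU2_of_mem_commutator_of_ringEquiv e fun B hB ↦
        isProdCommU2_of_mem_derivedSL2ZMod3 _ (coe_mem_derivedSL2ZMod3 hB),
      commutator_ne_top_of_ringEquiv e commutator_sl2ZMod3_ne_top⟩
end
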